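/- arXiv:math/0406517 — 4 statements merged into one kernel-verified Lean document; each statement's English description precedes it below -/
import Mathlib

section
/- For a Hausdorff continuous function f = [f̲, f̄] on Ω, the set W_f = {x ∈ Ω : f̲(x) < f̄(x)} of points where f assumes proper interval values is a meager set (set of first Baire category). -/
open Metric

/-- ℝⁿ -/
abbrev Rn (n : ℕ) := EuclideanSpace ℝ (Fin n)

/-- Lower Baire operator `I(D,Ω,f)(x) = sup_{δ>0} inf { f y : y ∈ B_δ(x) ∩ D }`. -/
noncomputable def lowerBaire {n : ℕ} (D : Set (Rn n)) (f : Rn n → EReal) (x : Rn n) : EReal :=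
  ⨆ δ > (0 : ℝ), ⨅ y ∈ Metric.ball x δ ∩ D, f y

/-- Upper Baire operator `S(D,Ω,f)(x) = inf_{δ>0} sup { f y : y ∈ B_δ(x) ∩ D }`. -/
noncomputable def upperBaire {n : ℕ} (D : Set (Rn n)) (f : Rn n → EReal) (x : Rn n) : EReal :=
  ⨅ δ > (0 : ℝ), ⨆ y ∈ Metric.ball x δ ∩ D, f y

theorem properValues_meagre {n : ℕ} (Ω : Set (Rn n)) (hΩ : IsOpen Ω)
    (fl fu : Rn n → EReal)
    (hle : ∀ x ∈ Ω, fl x ≤ fu x)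
    (hlsc : LowerSemicontinuousOn fl Ω) (husc : UpperSemicontinuousOn fu Ω)
    (hI : ∀ x ∈ Ω, fl x = lowerBaire Ω fu x)
    (hS : ∀ x ∈ Ω, fu x = upperBaire Ω fl x) :
    IsMeagre {x | x ∈ Ω ∧ fl x < fu x} := by
  classical
  set A : ℚ × ℚ → Set (Rn n) := fun p =>
    if p.1 < p.2 then
      {x | x ∈ Ω ∧ fl x ≤ ((p.1 : ℝ) : EReal) ∧ ((p.2 : ℝ) : EReal) ≤ fu x}
    else ∅ with hAdef
  -- each A p is nowhere dense
  have hnwd : ∀ p, IsNowhereDense (A p) := by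
    rintro ⟨q, r⟩
    by_cases hqr : q < r
    · simp only [hAdef, if_pos hqr]
      set B : Set (Rn n) :=
        {x | x ∈ Ω ∧ fl x ≤ ((q : ℝ) : EReal) ∧ ((r : ℝ) : EReal) ≤ fu x} with hBdef
      -- closure B ∩ Ω is contained in {fu ≥ r}
      have hclos : ∀ y ∈ closure B, y ∈ Ω → ((r : ℝ) : EReal) ≤ fu y := by
        intro y hy hyΩ
        by_contra hlt
        push_neg at hlt
        have hev : ∀ᶠ z in nhds y, fu z < ((r : ℝ) : EReal) := by
          have := husc y hyΩ ((r : ℝ) : EReal) hlt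
          rwa [hΩ.nhdsWithin_eq hyΩ] at this
        have hfreq : ∃ᶠ z in nhds y, z ∈ B := mem_closure_iff_frequently.1 hy
        obtain ⟨z, hz1, hz2⟩ := (hfreq.and_eventually hev).exists
        exact absurd hz1.2.2 (not_le.2 hz2)
      rw [IsNowhereDense, Set.eq_empty_iff_forall_notMem]
      intro x hx
      obtain ⟨ε, hε, hball⟩ := Metric.isOpen_iff.1 isOpen_interior x hx
      have hballclos : ball x ε ⊆ closure B := hball.trans interior_subset
      have hxclos : x ∈ closure B := interior_subset hx
      obtain ⟨a, haball, haB⟩ :=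
        (_root_.mem_closure_iff.1 hxclos (ball x ε) isOpen_ball (mem_ball_self hε))
      obtain ⟨haΩ, haq, har⟩ := haB
      obtain ⟨δ, hδ, hδball⟩ :=
        Metric.isOpen_iff.1 (isOpen_ball.inter hΩ) a ⟨haball, haΩ⟩
      -- every point of ball a δ ∩ Ω has fu ≥ r
      have hkey : ∀ y ∈ ball a δ ∩ Ω, ((r : ℝ) : EReal) ≤ fu y := by
        rintro y ⟨hy1, hy2⟩
        exact hclos y (hballclos (hδball hy1).1) hy2
      -- hence fl a ≥ r via the lower Baire operator
      have hfl : ((r : ℝ) : EReal) ≤ fl a := by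
        rw [hI a haΩ, lowerBaire]
        refine le_trans ?_ (le_iSup₂ (f := fun δ' (_ : δ' > (0 : ℝ)) =>
          ⨅ y ∈ ball a δ' ∩ Ω, fu y) δ hδ)
        exact le_iInf₂ fun y hy => hkey y hy
      have : ((r : ℝ) : EReal) ≤ ((q : ℝ) : EReal) := hfl.trans haq
      have hrq : ((q : ℝ) : EReal) < ((r : ℝ) : EReal) := by
        exact_mod_cast hqr
      exact absurd this (not_le.2 hrq)
    · simp only [hAdef, if_neg hqr]
      exact isNowhereDense_empty
  -- the proper-value set is covered by the A p
  have hsub : {x | x ∈ Ω ∧ fl x < fu x} ⊆ ⋃ p, A p := by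
    rintro x ⟨hxΩ, hxlt⟩
    obtain ⟨a, ha1, ha2⟩ := EReal.exists_between_coe_real hxlt
    obtain ⟨b, hb1, hb2⟩ := EReal.exists_between_coe_real ha2
    have hab : a < b := by exact_mod_cast hb1
    obtain ⟨q, hq1, hq2⟩ := exists_rat_btwn hab
    obtain ⟨r, hr1, hr2⟩ := exists_rat_btwn hq2
    have hqr : q < r := by exact_mod_cast hr1
    refine Set.mem_iUnion.2 ⟨(q, r), ?_⟩
    simp only [hAdef, if_pos hqr]
    refine ⟨hxΩ, ?_, ?_⟩
    · exact le_of_lt (lt_trans ha1 (by exact_mod_cast hq1))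
    · exact le_of_lt (lt_trans (by exact_mod_cast hr2) hb2)
  rw [isMeagre_iff_countable_union_isNowhereDense]
  exact ⟨Set.range A, by rintro t ⟨p, rfl⟩; exact hnwd p,
    Set.countable_range A, by rwa [Set.sUnion_range]⟩
end

section
/- For a Hausdorff continuous function f = [f̲, f̄] on a nonempty open set Ω ⊆ ℝⁿ, the set D_f = {x ∈ Ω : f̲(x) = f̄(x)} of points where f is point-valued is dense in Ω. -/
open Metric

/-- `fl = I(fu)` is lower semicontinuous on `Ω`: strict sublevel complements are open. -/
lemma isOpen_lt_lowerBaire {n : ℕ} (Ω : Set (Rn n)) (hΩ : IsOpen Ω)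
    (fl fu : Rn n → EReal) (hI : ∀ x ∈ Ω, fl x = lowerBaire Ω fu x) (c : EReal) :
    IsOpen {x | x ∈ Ω ∧ c < fl x} := by
  rw [Metric.isOpen_iff]
  rintro x ⟨hxΩ, hx⟩
  rw [hI x hxΩ, lowerBaire] at hx
  rw [lt_iSup_iff] at hx
  obtain ⟨δ, hx⟩ := hx
  rw [lt_iSup_iff] at hx
  obtain ⟨hδ, hx⟩ := hx
  obtain ⟨δΩ, hδΩ, hballΩ⟩ := Metric.isOpen_iff.1 hΩ x hxΩ
  refine ⟨min (δ / 2) δΩ, by positivity, ?_⟩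
  intro y hy
  have hyx : dist y x < min (δ / 2) δΩ := mem_ball.1 hy
  have hyΩ : y ∈ Ω := hballΩ (mem_ball.2 (lt_of_lt_of_le hyx (min_le_right _ _)))
  refine ⟨hyΩ, ?_⟩
  rw [hI y hyΩ, lowerBaire]
  have hsub : ball y (δ / 2) ∩ Ω ⊆ ball x δ ∩ Ω := by
    refine Set.inter_subset_inter_left _ ?_
    intro z hz
    have : dist z x ≤ dist z y + dist y x := dist_triangle z y x
    have h1 : dist z y < δ / 2 := mem_ball.1 hz
    have h2 : dist y x < δ / 2 := lt_of_lt_of_le hyx (min_le_left _ _)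
    exact mem_ball.2 (by linarith)
  calc c < ⨅ z ∈ ball x δ ∩ Ω, fu z := hx
    _ ≤ ⨅ z ∈ ball y (δ / 2) ∩ Ω, fu z := iInf_le_iInf_of_subset hsub
    _ ≤ ⨆ δ' > (0 : ℝ), ⨅ z ∈ ball y δ' ∩ Ω, fu z := by
        refine le_trans ?_ (le_iSup _ (δ / 2))
        exact le_trans (le_refl _) (le_iSup (fun _ : δ / 2 > 0 => _) (by positivity))

/-- `fu = S(fl)` is upper semicontinuous on `Ω`. -/
lemma isOpen_upperBaire_lt {n : ℕ} (Ω : Set (Rn n)) (hΩ : IsOpen Ω)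
    (fl fu : Rn n → EReal) (hS : ∀ x ∈ Ω, fu x = upperBaire Ω fl x) (c : EReal) :
    IsOpen {x | x ∈ Ω ∧ fu x < c} := by
  rw [Metric.isOpen_iff]
  rintro x ⟨hxΩ, hx⟩
  rw [hS x hxΩ, upperBaire] at hx
  rw [iInf_lt_iff] at hx
  obtain ⟨δ, hx⟩ := hx
  rw [iInf_lt_iff] at hx
  obtain ⟨hδ, hx⟩ := hx
  obtain ⟨δΩ, hδΩ, hballΩ⟩ := Metric.isOpen_iff.1 hΩ x hxΩ
  refine ⟨min (δ / 2) δΩ, by positivity, ?_⟩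
  intro y hy
  have hyx : dist y x < min (δ / 2) δΩ := mem_ball.1 hy
  have hyΩ : y ∈ Ω := hballΩ (mem_ball.2 (lt_of_lt_of_le hyx (min_le_right _ _)))
  refine ⟨hyΩ, ?_⟩
  rw [hS y hyΩ, upperBaire]
  have hsub : ball y (δ / 2) ∩ Ω ⊆ ball x δ ∩ Ω := by
    refine Set.inter_subset_inter_left _ ?_
    intro z hz
    have : dist z x ≤ dist z y + dist y x := dist_triangle z y x
    have h1 : dist z y < δ / 2 := mem_ball.1 hz
    have h2 : dist y x < δ / 2 := lt_of_lt_of_le hyx (min_le_left _ _)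
    exact mem_ball.2 (by linarith)
  calc ⨅ δ' > (0 : ℝ), ⨆ z ∈ ball y δ' ∩ Ω, fl z
      ≤ ⨆ z ∈ ball y (δ / 2) ∩ Ω, fl z := by
        refine le_trans (iInf_le _ (δ / 2)) ?_
        exact iInf_le (fun _ : δ / 2 > 0 => _) (by positivity)
    _ ≤ ⨆ z ∈ ball x δ ∩ Ω, fl z := by
        refine iSup_le fun z => iSup_le fun hz => ?_
        exact le_iSup₂ (f := fun z (_ : z ∈ ball x δ ∩ Ω) => fl z) z (hsub hz)
    _ < c := hx

theorem pointValues_dense {n : ℕ} (Ω : Set (Rn n)) (hΩ : IsOpen Ω)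
    (hne : Ω.Nonempty)
    (fl fu : Rn n → EReal)
    (hle : ∀ x ∈ Ω, fl x ≤ fu x)
    (hI : ∀ x ∈ Ω, fl x = lowerBaire Ω fu x)
    (hS : ∀ x ∈ Ω, fu x = upperBaire Ω fl x) :
    Ω ⊆ closure {x | x ∈ Ω ∧ fl x = fu x} := by
  intro x0 hx0
  rw [Metric.mem_closure_iff]
  intro ε hε
  by_contra hcon
  push_neg at hcon
  -- choose r > 0 with ball x0 r ⊆ Ω and r ≤ ε
  obtain ⟨r0, hr0, hball⟩ := Metric.isOpen_iff.1 hΩ x0 hx0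
  set r : ℝ := min r0 ε with hr_def
  have hr : 0 < r := lt_min hr0 hε
  have hballΩ : ball x0 r ⊆ Ω := fun z hz =>
    hball (mem_ball.2 (lt_of_lt_of_le (mem_ball.1 hz) (min_le_left _ _)))
  set ρ : ℝ := r / 2 with hρ_def
  have hρ : 0 < ρ := by positivity
  set K : Set (Rn n) := closedBall x0 ρ with hK_def
  have hKΩ : K ⊆ Ω := fun z hz => hballΩ (mem_ball.2 (lt_of_le_of_lt (mem_closedBall.1 hz) (by simp [hρ_def]; linarith)))
  -- no point of the small ball is point-valued
  have hlt : ∀ x ∈ K, fl x < fu x := by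
    intro x hx
    rcases lt_or_eq_of_le (hle x (hKΩ hx)) with h | h
    · exact h
    · exfalso
      have hge := hcon x ⟨hKΩ hx, h⟩
      have hd := mem_closedBall.1 hx
      have hre : r ≤ ε := min_le_right _ _
      have : dist x0 x < ε := by
        rw [dist_comm]
        calc dist x x0 ≤ ρ := hd
          _ < ε := by simp only [hρ_def]; linarith
      linarith
  -- the closed pieces
  let G : {pq : ℚ × ℚ // pq.1 < pq.2} → Set (Rn n) := fun pq =>
    {x | x ∈ K ∧ fl x ≤ ((pq.1.1 : ℝ) : EReal) ∧ ((pq.1.2 : ℝ) : EReal) ≤ fu x}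
  let F : Option {pq : ℚ × ℚ // pq.1 < pq.2} → Set (Rn n) := fun o => o.elim (ball x0 ρ)ᶜ G
  have hGclosed : ∀ pq, IsClosed (G pq) := by
    intro pq
    have h1 := isOpen_lt_lowerBaire Ω hΩ fl fu hI ((pq.1.1 : ℝ) : EReal)
    have h2 := isOpen_upperBaire_lt Ω hΩ fl fu hS ((pq.1.2 : ℝ) : EReal)
    have : G pq = K ∩ ({x | x ∈ Ω ∧ ((pq.1.1 : ℝ) : EReal) < fl x} ∪
        {x | x ∈ Ω ∧ fu x < ((pq.1.2 : ℝ) : EReal)})ᶜ := by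
      ext z
      simp only [G, Set.mem_inter_iff, Set.mem_compl_iff, Set.mem_union, Set.mem_setOf_eq]
      constructor
      · rintro ⟨hzK, h1, h2⟩
        exact ⟨hzK, by push_neg; exact ⟨fun _ => h1, fun _ => h2⟩⟩
      · rintro ⟨hzK, h⟩
        push_neg at h
        exact ⟨hzK, h.1 (hKΩ hzK), h.2 (hKΩ hzK)⟩
    rw [this]
    exact Metric.isClosed_closedBall.inter (h1.union h2).isClosed_compl
  have hFclosed : ∀ o, IsClosed (F o) := by
    rintro (_ | pq)
    · exact isOpen_ball.isClosed_compl
    · exact hGclosed pq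
  have hcover : ⋃ o, F o = Set.univ := by
    rw [Set.eq_univ_iff_forall]
    intro x
    by_cases hxK : x ∈ K
    · have h := hlt x hxK
      obtain ⟨p, hp1, hp2⟩ := EReal.exists_rat_btwn_of_lt h
      obtain ⟨q, hq1, hq2⟩ := EReal.exists_rat_btwn_of_lt hp2
      have hpq : p < q := by exact_mod_cast hq1
      exact Set.mem_iUnion.2 ⟨some ⟨(p, q), hpq⟩, hxK, le_of_lt hp1, le_of_lt hq2⟩
    · refine Set.mem_iUnion.2 ⟨none, ?_⟩
      simp only [F, Option.elim, Set.mem_compl_iff]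
      exact fun hx => hxK (ball_subset_closedBall hx)
  have hdense := dense_iUnion_interior_of_closed hFclosed hcover
  obtain ⟨z, hzint, hz⟩ := hdense.exists_mem_open isOpen_ball (Metric.nonempty_ball.2 hρ)
  obtain ⟨o, hzo⟩ := Set.mem_iUnion.1 hzint
  match o with
  | none =>
      exact (interior_subset hzo : z ∈ (ball x0 ρ)ᶜ) hz
  | some pq =>
      have hpq : pq.1.1 < pq.1.2 := pq.2
      obtain ⟨δ, hδ, hballG⟩ := Metric.isOpen_iff.1 isOpen_interior z hzo
      have hzG : z ∈ G pq := interior_subset hzo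
      have hzΩ : z ∈ Ω := hKΩ hzG.1
      -- fu z ≤ p
      have hfu_le : fu z ≤ ((pq.1.1 : ℝ) : EReal) := by
        rw [hS z hzΩ, upperBaire]
        refine le_trans (iInf_le _ δ) (le_trans (iInf_le _ hδ) ?_)
        refine iSup_le fun y => iSup_le fun hy => ?_
        have hyG : y ∈ G pq := interior_subset (hballG hy.1)
        exact hyG.2.1
      have hq_le : ((pq.1.2 : ℝ) : EReal) ≤ fu z := hzG.2.2
      have : ((pq.1.2 : ℝ) : EReal) ≤ ((pq.1.1 : ℝ) : EReal) := hq_le.trans hfu_le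
      have h' : (pq.1.2 : ℚ) ≤ pq.1.1 := by exact_mod_cast this
      exact absurd h' (not_le.2 hpq)
end

section
/- If D is a dense subset of the open set Ω ⊆ ℝⁿ and f : D → ℝ is continuous, then the graph completion F(D,Ω,f) = [I(D,Ω,f), S(D,Ω,f)] is Hausdorff continuous on Ω, i.e., I(D,Ω,f) is lower semicontinuous, S(D,Ω,f) is upper semicontinuous, S(Ω,Ω,I(D,Ω,f)) = S(D,Ω,f), and I(Ω,Ω,S(D,Ω,f)) = I(D,Ω,f). -/
open Metric

/-!
`I(D,f)` and `S(D,f)` are semicontinuous because a ball around `x` contains a smaller ball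
around every nearby point. For the two identities, continuity of `f` on `D` gives
`S(D,f) ≤ f ≤ I(D,f)` on `D ⊆ Ω`, which yields one inequality each; density of `D` in `Ω`
gives the other: for `y ∈ Ω` in the ball `B_δ(x)`, every ball around `y` meets `B_δ(x) ∩ D`, so
`I(D,f)(y) ≤ sup {f z : z ∈ B_δ(x) ∩ D}`, and dually for `S`.
-/

open Filter Set

variable {n : ℕ}

theorem lowerBaire_lowerSemicontinuous (D : Set (Rn n)) (g : Rn n → EReal) :
    LowerSemicontinuous (lowerBaire D g) := by
  intro x c hc
  obtain ⟨δ, hδ, hc⟩ : ∃ δ > 0, c < ⨅ y ∈ ball x δ ∩ D, g y := by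
    simpa only [lowerBaire, lt_iSup_iff, exists_prop] using hc
  filter_upwards [ball_mem_nhds x (half_pos hδ)] with x' hx'
  have hsub : ball x' (δ / 2) ⊆ ball x δ := ball_subset_ball' (by linarith [mem_ball.1 hx'])
  calc c < ⨅ y ∈ ball x δ ∩ D, g y := hc
    _ ≤ ⨅ y ∈ ball x' (δ / 2) ∩ D, g y := biInf_mono (inter_subset_inter_left D hsub)
    _ ≤ lowerBaire D g x' := le_iSup₂_of_le (δ / 2) (half_pos hδ) le_rfl

theorem upperBaire_upperSemicontinuous (D : Set (Rn n)) (g : Rn n → EReal) :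
    UpperSemicontinuous (upperBaire D g) := by
  intro x c hc
  obtain ⟨δ, hδ, hc⟩ : ∃ δ > 0, ⨆ y ∈ ball x δ ∩ D, g y < c := by
    simpa only [upperBaire, iInf_lt_iff, exists_prop] using hc
  filter_upwards [ball_mem_nhds x (half_pos hδ)] with x' hx'
  have hsub : ball x' (δ / 2) ⊆ ball x δ := ball_subset_ball' (by linarith [mem_ball.1 hx'])
  calc upperBaire D g x' ≤ ⨆ y ∈ ball x' (δ / 2) ∩ D, g y :=
        iInf₂_le_of_le (δ / 2) (half_pos hδ) le_rfl
    _ ≤ ⨆ y ∈ ball x δ ∩ D, g y := biSup_mono (inter_subset_inter_left D hsub)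
    _ < c := hc

theorem le_lowerBaire_of_lowerSemicontinuousWithinAt {D : Set (Rn n)} {g : Rn n → EReal}
    {y : Rn n} (hg : LowerSemicontinuousWithinAt g D y) : g y ≤ lowerBaire D g y := by
  refine le_of_forall_lt_imp_le_of_dense fun c hc => ?_
  obtain ⟨ε, hε, hsub⟩ := Metric.mem_nhdsWithin_iff.1 (hg c hc)
  exact le_iSup₂_of_le ε hε (le_iInf₂ fun z hz => (hsub hz).le)

theorem upperBaire_le_of_upperSemicontinuousWithinAt {D : Set (Rn n)} {g : Rn n → EReal}
    {y : Rn n} (hg : UpperSemicontinuousWithinAt g D y) : upperBaire D g y ≤ g y := by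
  refine le_of_forall_gt_imp_ge_of_dense fun c hc => ?_
  obtain ⟨ε, hε, hsub⟩ := Metric.mem_nhdsWithin_iff.1 (hg c hc)
  exact iInf₂_le_of_le ε hε (iSup₂_le fun z hz => (hsub hz).le)

theorem lowerBaire_le_biSup_of_mem_closure {D : Set (Rn n)} (g : Rn n → EReal) {x y : Rn n}
    {δ : ℝ} (hy : y ∈ ball x δ) (hyD : y ∈ closure D) :
    lowerBaire D g y ≤ ⨆ z ∈ ball x δ ∩ D, g z := by
  refine iSup₂_le fun ε hε => ?_
  obtain ⟨z, ⟨hzε, hzδ⟩, hzD⟩ := mem_closure_iff_nhds.1 hyD _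
    (inter_mem (ball_mem_nhds y hε) (isOpen_ball.mem_nhds hy))
  exact (biInf_le g (mem_inter hzε hzD)).trans (le_biSup g (mem_inter hzδ hzD))

theorem biInf_le_upperBaire_of_mem_closure {D : Set (Rn n)} (g : Rn n → EReal) {x y : Rn n}
    {δ : ℝ} (hy : y ∈ ball x δ) (hyD : y ∈ closure D) :
    ⨅ z ∈ ball x δ ∩ D, g z ≤ upperBaire D g y := by
  refine le_iInf₂ fun ε hε => ?_
  obtain ⟨z, ⟨hzε, hzδ⟩, hzD⟩ := mem_closure_iff_nhds.1 hyD _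
    (inter_mem (ball_mem_nhds y hε) (isOpen_ball.mem_nhds hy))
  exact (biInf_le g (mem_inter hzδ hzD)).trans (le_biSup g (mem_inter hzε hzD))

section Completion

variable {Ω D : Set (Rn n)} {g : Rn n → EReal}

theorem upperBaire_lowerBaire (hD : D ⊆ Ω) (hdense : Ω ⊆ closure D)
    (hg : LowerSemicontinuousOn g D) (x : Rn n) :
    upperBaire Ω (lowerBaire D g) x = upperBaire D g x := by
  refine le_antisymm (iInf₂_mono fun δ _ => iSup₂_le fun y hy => ?_)
    (iInf₂_mono fun δ _ => iSup₂_le fun y hy => ?_)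
  · exact lowerBaire_le_biSup_of_mem_closure g hy.1 (hdense hy.2)
  · exact (le_lowerBaire_of_lowerSemicontinuousWithinAt (hg y hy.2)).trans
      (le_biSup (lowerBaire D g) (mem_inter hy.1 (hD hy.2)))

theorem lowerBaire_upperBaire (hD : D ⊆ Ω) (hdense : Ω ⊆ closure D)
    (hg : UpperSemicontinuousOn g D) (x : Rn n) :
    lowerBaire Ω (upperBaire D g) x = lowerBaire D g x := by
  refine le_antisymm (iSup₂_mono fun δ _ => le_iInf₂ fun y hy => ?_)
    (iSup₂_mono fun δ _ => le_iInf₂ fun y hy => ?_)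
  · exact (biInf_le (upperBaire D g) (mem_inter hy.1 (hD hy.2))).trans
      (upperBaire_le_of_upperSemicontinuousWithinAt (hg y hy.2))
  · exact biInf_le_upperBaire_of_mem_closure g hy.1 (hdense hy.2)

end Completion

theorem graphCompletion_Hcontinuous_general {n : ℕ} (Ω D : Set (Rn n))
    (hD : D ⊆ Ω) (hdense : Ω ⊆ closure D)
    (f : Rn n → ℝ) (hf : ContinuousOn f D) :
    LowerSemicontinuousOn (lowerBaire D (fun y => (f y : EReal))) Ω ∧
    UpperSemicontinuousOn (upperBaire D (fun y => (f y : EReal))) Ω ∧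
    (∀ x ∈ Ω, upperBaire Ω (lowerBaire D (fun y => (f y : EReal))) x
        = upperBaire D (fun y => (f y : EReal)) x) ∧
    (∀ x ∈ Ω, lowerBaire Ω (upperBaire D (fun y => (f y : EReal))) x
        = lowerBaire D (fun y => (f y : EReal)) x) := by
  have hg : ContinuousOn (fun y => (f y : EReal)) D :=
    continuous_coe_real_ereal.comp_continuousOn hf
  exact ⟨(lowerBaire_lowerSemicontinuous D _).lowerSemicontinuousOn Ω,
    (upperBaire_upperSemicontinuous D _).upperSemicontinuousOn Ω,
    fun x _ => upperBaire_lowerBaire hD hdense hg.lowerSemicontinuousOn x,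
    fun x _ => lowerBaire_upperBaire hD hdense hg.upperSemicontinuousOn x⟩

theorem graphCompletion_Hcontinuous {n : ℕ} (Ω D : Set (Rn n)) (hΩ : IsOpen Ω)
    (hD : D ⊆ Ω) (hdense : Ω ⊆ closure D)
    (f : Rn n → ℝ) (hf : ContinuousOn f D) :
    LowerSemicontinuousOn (lowerBaire D (fun y => (f y : EReal))) Ω ∧
    UpperSemicontinuousOn (upperBaire D (fun y => (f y : EReal))) Ω ∧
    (∀ x ∈ Ω, upperBaire Ω (lowerBaire D (fun y => (f y : EReal))) x
        = upperBaire D (fun y => (f y : EReal)) x) ∧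
    (∀ x ∈ Ω, lowerBaire Ω (upperBaire D (fun y => (f y : EReal))) x
        = lowerBaire D (fun y => (f y : EReal)) x) :=
  graphCompletion_Hcontinuous_general Ω D hD hdense f hf
end

section
/- Let Γ₁ and Γ₂ be closed nowhere dense subsets of an open set Ω ⊆ ℝⁿ, and let u : Ω → ℝ be continuous on Ω∖Γ₁ and on Ω∖Γ₂. Then the graph completions agree: F(Ω∖Γ₁, Ω, u) = F(Ω∖Γ₂, Ω, u), i.e., I(Ω∖Γ₁,Ω,u) = I(Ω∖Γ₂,Ω,u) and S(Ω∖Γ₁,Ω,u) = S(Ω∖Γ₂,Ω,u) on Ω. -/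
open Metric

/-- Key approximation: points of a dense subset `D` of `D₁` realize values close
to `u y` for `y ∈ D₁` (with continuity of `u` on the open set `D₁`). -/
lemma baire_key {n : ℕ} {D D₁ : Set (Rn n)} (hD : D ⊆ D₁) (hopen : IsOpen D₁)
    (hdense : D₁ ⊆ closure D) {u : Rn n → ℝ} (hu : ContinuousOn u D₁)
    {x y : Rn n} {δ : ℝ} (hy : y ∈ Metric.ball x δ ∩ D₁) {ε : ℝ} (hε : 0 < ε) :
    ∃ z ∈ Metric.ball x δ ∩ D, dist (u z) (u y) < ε := by
  have hcont : ContinuousAt u y := hu.continuousAt (hopen.mem_nhds hy.2)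
  rw [Metric.continuousAt_iff] at hcont
  obtain ⟨δ', hδ', hball⟩ := hcont ε hε
  have hyx : dist y x < δ := Metric.mem_ball.1 hy.1
  have hpos : 0 < min δ' (δ - dist y x) := lt_min hδ' (by linarith)
  have hyc : y ∈ closure D := hdense hy.2
  obtain ⟨z, hzD, hzy⟩ := Metric.mem_closure_iff.1 hyc _ hpos
  refine ⟨z, ⟨Metric.mem_ball.2 ?_, hzD⟩, hball (by
    rw [dist_comm]; exact lt_of_lt_of_le hzy (min_le_left _ _))⟩
  calc dist z x ≤ dist z y + dist y x := dist_triangle _ _ _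
    _ < (δ - dist y x) + dist y x := by
        have : dist z y < δ - dist y x := by
          rw [dist_comm]; exact lt_of_lt_of_le hzy (min_le_right _ _)
        linarith
    _ = δ := by ring

lemma baire_inf_eq {n : ℕ} {D D₁ : Set (Rn n)} (hD : D ⊆ D₁) (hopen : IsOpen D₁)
    (hdense : D₁ ⊆ closure D) {u : Rn n → ℝ} (hu : ContinuousOn u D₁)
    (x : Rn n) (δ : ℝ) :
    (⨅ y ∈ Metric.ball x δ ∩ D₁, (u y : EReal))
      = ⨅ y ∈ Metric.ball x δ ∩ D, (u y : EReal) := by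
  refine le_antisymm (le_iInf₂ fun y hy => iInf₂_le y ⟨hy.1, hD hy.2⟩) ?_
  refine le_iInf₂ fun y hy => ?_
  refine le_of_forall_gt_imp_ge_of_dense fun c hc => ?_
  obtain ⟨r, hr1, hr2⟩ := EReal.lt_iff_exists_real_btwn.1 hc
  have hε : (0 : ℝ) < r - u y := by exact_mod_cast sub_pos.2 (EReal.coe_lt_coe_iff.1 hr1)
  obtain ⟨z, hz, hdz⟩ := baire_key hD hopen hdense hu hy hε
  refine le_trans (iInf₂_le z hz) (le_trans ?_ hr2.le)
  have := abs_lt.1 (Real.dist_eq _ _ ▸ hdz)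
  exact_mod_cast (by linarith : u z ≤ r)

lemma baire_sup_eq {n : ℕ} {D D₁ : Set (Rn n)} (hD : D ⊆ D₁) (hopen : IsOpen D₁)
    (hdense : D₁ ⊆ closure D) {u : Rn n → ℝ} (hu : ContinuousOn u D₁)
    (x : Rn n) (δ : ℝ) :
    (⨆ y ∈ Metric.ball x δ ∩ D₁, (u y : EReal))
      = ⨆ y ∈ Metric.ball x δ ∩ D, (u y : EReal) := by
  refine le_antisymm ?_ (iSup₂_le fun y hy => le_iSup₂_of_le y ⟨hy.1, hD hy.2⟩ le_rfl)
  refine iSup₂_le fun y hy => ?_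
  refine le_of_forall_lt_imp_le_of_dense fun c hc => ?_
  obtain ⟨r, hr1, hr2⟩ := EReal.lt_iff_exists_real_btwn.1 hc
  have hε : (0 : ℝ) < u y - r := by exact_mod_cast sub_pos.2 (EReal.coe_lt_coe_iff.1 hr2)
  obtain ⟨z, hz, hdz⟩ := baire_key hD hopen hdense hu hy hε
  refine le_trans hr1.le (le_trans ?_ (le_iSup₂ z hz))
  have := abs_lt.1 (Real.dist_eq _ _ ▸ hdz)
  exact_mod_cast (by linarith : r ≤ u z)

lemma baire_eq {n : ℕ} {D D₁ : Set (Rn n)} (hD : D ⊆ D₁) (hopen : IsOpen D₁)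
    (hdense : D₁ ⊆ closure D) {u : Rn n → ℝ} (hu : ContinuousOn u D₁) (x : Rn n) :
    lowerBaire D₁ (fun y => (u y : EReal)) x = lowerBaire D (fun y => (u y : EReal)) x ∧
    upperBaire D₁ (fun y => (u y : EReal)) x = upperBaire D (fun y => (u y : EReal)) x := by
  constructor
  · exact iSup_congr fun δ => iSup_congr fun _ => baire_inf_eq hD hopen hdense hu x δ
  · exact iInf_congr fun δ => iInf_congr fun _ => baire_sup_eq hD hopen hdense hu x δ

theorem graphCompletion_indep_of_gamma {n : ℕ} (Ω Γ₁ Γ₂ : Set (Rn n)) (hΩ : IsOpen Ω)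
    (hΓ₁ : Γ₁ ⊆ Ω) (hΓ₂ : Γ₂ ⊆ Ω)
    (hc₁ : ∃ C : Set (Rn n), IsClosed C ∧ Γ₁ = Ω ∩ C)
    (hc₂ : ∃ C : Set (Rn n), IsClosed C ∧ Γ₂ = Ω ∩ C)
    (hnd₁ : IsNowhereDense Γ₁) (hnd₂ : IsNowhereDense Γ₂)
    (u : Rn n → ℝ)
    (hu₁ : ContinuousOn u (Ω \ Γ₁)) (hu₂ : ContinuousOn u (Ω \ Γ₂)) :
    ∀ x ∈ Ω,
      lowerBaire (Ω \ Γ₁) (fun y => (u y : EReal)) x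
        = lowerBaire (Ω \ Γ₂) (fun y => (u y : EReal)) x ∧
      upperBaire (Ω \ Γ₁) (fun y => (u y : EReal)) x
        = upperBaire (Ω \ Γ₂) (fun y => (u y : EReal)) x := by
  intro x hx
  set D : Set (Rn n) := Ω \ (Γ₁ ∪ Γ₂) with hDdef
  -- openness of Ω \ Γᵢ
  have hopen : ∀ Γ : Set (Rn n), (∃ C : Set (Rn n), IsClosed C ∧ Γ = Ω ∩ C) →
      IsOpen (Ω \ Γ) := by
    rintro Γ ⟨C, hC, rfl⟩
    have : Ω \ (Ω ∩ C) = Ω ∩ Cᶜ := by rw [Set.diff_self_inter, Set.diff_eq]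
    rw [this]
    exact hΩ.inter hC.isOpen_compl
  have ho₁ := hopen Γ₁ hc₁
  have ho₂ := hopen Γ₂ hc₂
  -- density of D in Ω \ Γᵢ
  have hdense : ∀ Γ Γ' : Set (Rn n), IsOpen (Ω \ Γ) → IsNowhereDense Γ' →
      (Ω \ Γ) ⊆ closure (Ω \ (Γ ∪ Γ')) := by
    intro Γ Γ' ho hnd
    have hd : Dense (closure Γ')ᶜ := interior_eq_empty_iff_dense_compl.1 hnd
    intro z hz
    have h1 : (Ω \ Γ) ⊆ closure ((Ω \ Γ) ∩ (closure Γ')ᶜ) :=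
      hd.open_subset_closure_inter ho
    refine closure_mono ?_ (h1 hz)
    rintro w ⟨⟨hwΩ, hwΓ⟩, hwc⟩
    exact ⟨hwΩ, fun h => h.elim hwΓ (fun h' => hwc (subset_closure h'))⟩
  have hsub₁ : D ⊆ Ω \ Γ₁ := fun z hz => ⟨hz.1, fun h => hz.2 (Or.inl h)⟩
  have hsub₂ : D ⊆ Ω \ Γ₂ := fun z hz => ⟨hz.1, fun h => hz.2 (Or.inr h)⟩
  have hd₁ : (Ω \ Γ₁) ⊆ closure D := by
    have := hdense Γ₁ Γ₂ ho₁ hnd₂; rwa [hDdef]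
  have hd₂ : (Ω \ Γ₂) ⊆ closure D := by
    have := hdense Γ₂ Γ₁ ho₂ hnd₁
    intro z hz
    refine closure_mono ?_ (this hz)
    intro w hw
    exact ⟨hw.1, fun h => hw.2 (Or.symm h)⟩
  have e₁ := baire_eq hsub₁ ho₁ hd₁ hu₁ x
  have e₂ := baire_eq hsub₂ ho₂ hd₂ hu₂ x
  exact ⟨e₁.1.trans e₂.1.symm, e₁.2.trans e₂.2.symm⟩
end
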